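/- Let k ≥ 3, n ≥ 1, let i be a peg, and let v be any vertex of the Tower of Hanoi graph H_n^k. Then every walk of minimal length (i.e., of length equal to the graph distance) from the perfect state \overline{i} to v moves the largest disk exactly zero times if v lies in the substructure [i], and exactly once otherwise; that is, the number of edges of the walk at which the position of disk n−1 changes is 0 if v(n−1) = i and 1 if v(n−1) ≠ i. -/

import Mathlib

/-- The Tower of Hanoi graph `H_n^k`: vertices are functions `Fin n → Fin k`
(disk `i` lies on peg `v i`; smaller indices are smaller disks); two states are
adjacent iff they differ by one legal move of a single disk `d`: the position of
`d` changes, all other disks stay, and no smaller disk lies on the source peg or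
the target peg of `d`. -/
def hanoiGraph (n k : ℕ) : SimpleGraph (Fin n → Fin k) where
  Adj v w := ∃ d : Fin n, v d ≠ w d ∧ (∀ i : Fin n, i ≠ d → v i = w i) ∧
    (∀ i : Fin n, i < d → v i ≠ v d ∧ v i ≠ w d)
  symm := by
    constructor; rintro v w ⟨d, h1, h2, h3⟩
    refine ⟨d, h1.symm, fun i hi => (h2 i hi).symm, fun i hi => ?_⟩
    have he : v i = w i := h2 i (ne_of_lt hi)
    have h := h3 i hi
    exact ⟨he ▸ h.2, he ▸ h.1⟩
  loopless := by constructor; rintro v ⟨d, h1, -⟩; exact h1 rfl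

/-- The number of edges of a walk in `H_n^k` at which the position of disk `d`
changes. -/
def changeCount {n k : ℕ} (d : Fin n) :
    {u v : Fin n → Fin k} → (hanoiGraph n k).Walk u v → ℕ
  | _, _, SimpleGraph.Walk.nil => 0
  | u, _, SimpleGraph.Walk.cons (v := x) _ p =>
      (if u d = x d then 0 else 1) + changeCount d p

/-! If a geodesic from the perfect state `\overline{i}` moved the largest disk `d` twice, look at
its first two moves of `d`, say `i → a` and then `a → b`; in between only smaller disks move.
If `b = i`, deleting both moves (replaying the smaller disks with `d` parked on `i`) gives a
shorter walk. If `b ≠ i`, relabel the pegs by the transposition `(a b)` along the walk up to the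
second move: this fixes `\overline{i}` and, since no smaller disk lies on `a` or `b` at the second
move, sends the state before that move to the state after it, saving one move. Hence a geodesic
moves `d` at most once, and the count is then read off from where `d` ends up. -/

open SimpleGraph Function

namespace hanoiGraph

variable {n k : ℕ}

section changeCount

variable (d : Fin n)

@[simp]
lemma changeCount_nil {u : Fin n → Fin k} :
    changeCount d (Walk.nil : (hanoiGraph n k).Walk u u) = 0 := rfl

@[simp]
lemma changeCount_cons {u x v : Fin n → Fin k} (h : (hanoiGraph n k).Adj u x)
    (p : (hanoiGraph n k).Walk x v) :
    changeCount d (Walk.cons h p) = (if u d = x d then 0 else 1) + changeCount d p := rfl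

@[simp]
lemma changeCount_append {u v w : Fin n → Fin k} (p : (hanoiGraph n k).Walk u v)
    (q : (hanoiGraph n k).Walk v w) :
    changeCount d (p.append q) = changeCount d p + changeCount d q := by
  induction p with
  | nil => simp
  | cons h p ih => simp [ih, Nat.add_assoc]

lemma apply_eq_of_changeCount_eq_zero {u v : Fin n → Fin k} (p : (hanoiGraph n k).Walk u v)
    (hp : changeCount d p = 0) : u d = v d := by
  induction p with
  | nil => rfl
  | cons h p ih =>
    rw [changeCount_cons] at hp
    split_ifs at hp with hux
    · exact hux.trans (ih (by omega))
    · omega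

lemma apply_ne_of_changeCount_eq_one {u v : Fin n → Fin k} (p : (hanoiGraph n k).Walk u v)
    (hp : changeCount d p = 1) : u d ≠ v d := by
  induction p with
  | nil => simp at hp
  | cons h p ih =>
    rw [changeCount_cons] at hp
    split_ifs at hp with hux
    · exact hux ▸ ih (by omega)
    · rwa [apply_eq_of_changeCount_eq_zero d p (by omega)] at hux

lemma changeCount_eq_ite_of_le_one {u v : Fin n → Fin k} (p : (hanoiGraph n k).Walk u v)
    (hp : changeCount d p ≤ 1) : changeCount d p = if v d = u d then 0 else 1 := by
  split_ifs with hvu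
  · by_contra h
    exact apply_ne_of_changeCount_eq_one d p (by omega) hvu.symm
  · by_contra h
    exact hvu (apply_eq_of_changeCount_eq_zero d p (by omega)).symm

lemma exists_eq_append_cons_of_changeCount_pos {u v : Fin n → Fin k}
    (p : (hanoiGraph n k).Walk u v) (hp : 0 < changeCount d p) :
    ∃ (x y : Fin n → Fin k) (q : (hanoiGraph n k).Walk u x) (h : (hanoiGraph n k).Adj x y)
      (r : (hanoiGraph n k).Walk y v),
      changeCount d q = 0 ∧ x d ≠ y d ∧ p = q.append (Walk.cons h r) := by
  induction p with
  | nil => simp at hp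
  | @cons u x v h p ih =>
    by_cases hux : u d = x d
    · obtain ⟨a, b, q, hab, r, hq, hne, rfl⟩ := ih (by simpa [hux] using hp)
      exact ⟨a, b, Walk.cons h q, hab, r, by simp [hux, hq], hne, rfl⟩
    · exact ⟨u, x, Walk.nil, h, p, rfl, hux, rfl⟩

end changeCount

lemma adj_iff_of_apply_ne {d : Fin n} {x y : Fin n → Fin k} (hxy : x d ≠ y d) :
    (hanoiGraph n k).Adj x y ↔
      (∀ j, j ≠ d → x j = y j) ∧ ∀ j, j < d → x j ≠ x d ∧ x j ≠ y d := by
  refine ⟨fun ⟨e, _, hfix, hfree⟩ => ?_, fun ⟨hfix, hfree⟩ => ⟨d, hxy, hfix, hfree⟩⟩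
  obtain rfl : e = d := by
    by_contra hed
    exact hxy (hfix d (Ne.symm hed))
  exact ⟨hfix, hfree⟩

def relabelPegs (σ : Equiv.Perm (Fin k)) : hanoiGraph n k →g hanoiGraph n k where
  toFun v := σ ∘ v
  map_rel' := by
    rintro v w ⟨e, hmove, hfix, hfree⟩
    refine ⟨e, σ.injective.ne hmove, fun j hj => congrArg σ (hfix j hj), fun j hj => ?_⟩
    exact ⟨σ.injective.ne (hfree j hj).1, σ.injective.ne (hfree j hj).2⟩

section largestDisk

variable {d : Fin n} (hd : IsTop d)
include hd

lemma adj_update_of_apply_eq {a x : Fin n → Fin k} (h : (hanoiGraph n k).Adj a x)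
    (hax : a d = x d) (c : Fin k) :
    (hanoiGraph n k).Adj (update a d c) (update x d c) := by
  obtain ⟨e, hmove, hfix, hfree⟩ := h
  have hed : e ≠ d := fun h => hmove (h ▸ hax)
  have hsmall : ∀ j, j < e → j ≠ d := fun j hj => (hj.trans_le (hd e)).ne
  refine ⟨e, by simpa [update_of_ne hed] using hmove, fun j hj => ?_, fun j hj => ?_⟩
  · rcases eq_or_ne j d with rfl | hjd
    · simp
    · simpa [update_of_ne hjd] using hfix j hj
  · simpa [update_of_ne (hsmall j hj), update_of_ne hed] using hfree j hj

lemma exists_walk_update_of_changeCount_eq_zero (c : Fin k) {a b : Fin n → Fin k}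
    (r : (hanoiGraph n k).Walk a b) (hr : changeCount d r = 0) :
    ∃ r' : (hanoiGraph n k).Walk (update a d c) (update b d c), r'.length = r.length := by
  induction r with
  | nil => exact ⟨Walk.nil, rfl⟩
  | @cons a x b h r ih =>
    rw [changeCount_cons] at hr
    split_ifs at hr with hax
    · obtain ⟨r', hr'⟩ := ih (by omega)
      exact ⟨Walk.cons (adj_update_of_apply_eq hd h hax c) r', by simp [hr']⟩
    · omega

lemma exists_walk_of_move_back {x y x' y' : Fin n → Fin k} (h : (hanoiGraph n k).Adj x y)
    (hxy : x d ≠ y d) (r : (hanoiGraph n k).Walk y x') (hr : changeCount d r = 0)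
    (h' : (hanoiGraph n k).Adj x' y') (hxy' : x' d ≠ y' d) (hback : y' d = x d) :
    ∃ w : (hanoiGraph n k).Walk x y', w.length = r.length := by
  have hstart : update y d (x d) = x := by
    funext j
    rcases eq_or_ne j d with rfl | hjd
    · simp
    · simpa [update_of_ne hjd] using (((adj_iff_of_apply_ne hxy).1 h).1 j hjd).symm
  have hend : update x' d (x d) = y' := by
    funext j
    rcases eq_or_ne j d with rfl | hjd
    · simp [hback]
    · simpa [update_of_ne hjd] using ((adj_iff_of_apply_ne hxy').1 h').1 j hjd
  obtain ⟨w, hw⟩ := exists_walk_update_of_changeCount_eq_zero hd (x d) r hr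
  exact ⟨w.copy hstart hend, by simp [hw]⟩

lemma swap_comp_eq_of_adj {x y : Fin n → Fin k} (h : (hanoiGraph n k).Adj x y)
    (hxy : x d ≠ y d) : Equiv.swap (x d) (y d) ∘ x = y := by
  obtain ⟨hfix, hfree⟩ := (adj_iff_of_apply_ne hxy).1 h
  funext j
  rcases eq_or_ne j d with rfl | hjd
  · simp
  · obtain ⟨hsrc, htgt⟩ := hfree j ((hd j).lt_of_ne hjd)
    simpa [Equiv.swap_apply_of_ne_of_ne hsrc htgt] using hfix j hjd

lemma exists_walk_of_move_avoiding {i : Fin k} {x y : Fin n → Fin k}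
    (s : (hanoiGraph n k).Walk (fun _ => i) x) (h : (hanoiGraph n k).Adj x y)
    (hxy : x d ≠ y d) (hix : i ≠ x d) (hiy : i ≠ y d) :
    ∃ w : (hanoiGraph n k).Walk (fun _ => i) y, w.length = s.length := by
  have hstart : relabelPegs (Equiv.swap (x d) (y d)) (fun _ : Fin n => i) = fun _ => i :=
    funext fun _ => Equiv.swap_apply_of_ne_of_ne hix hiy
  have hend : relabelPegs (Equiv.swap (x d) (y d)) x = y := swap_comp_eq_of_adj hd h hxy
  exact ⟨(s.map (relabelPegs _)).copy hstart hend, by simp⟩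

lemma changeCount_le_one_of_length_eq_dist {i : Fin k} {v : Fin n → Fin k}
    (p : (hanoiGraph n k).Walk (fun _ => i) v)
    (hp : p.length = (hanoiGraph n k).dist (fun _ => i) v) : changeCount d p ≤ 1 := by
  by_contra! htwo
  obtain ⟨x, y, q, h, r, hq, hxy, rfl⟩ :=
    exists_eq_append_cons_of_changeCount_pos d p (by omega)
  obtain ⟨x', y', r₁, h', r₂, hr₁, hxy', rfl⟩ :=
    exists_eq_append_cons_of_changeCount_pos d r (by simp [hq, hxy] at htwo; omega)
  have hxi : x d = i := (apply_eq_of_changeCount_eq_zero d q hq).symm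
  have hyx' : y d = x' d := apply_eq_of_changeCount_eq_zero d r₁ hr₁
  suffices ∃ w : (hanoiGraph n k).Walk (fun _ => i) y', w.length < q.length + r₁.length + 2 by
    obtain ⟨w, hw⟩ := this
    have := dist_le (w.append r₂)
    simp only [Walk.length_append, Walk.length_cons] at hp this
    omega
  by_cases hback : y' d = i
  · obtain ⟨w, hw⟩ := exists_walk_of_move_back hd h hxy r₁ hr₁ h' hxy' (hback.trans hxi.symm)
    exact ⟨q.append w, by simp [hw]⟩
  · obtain ⟨w, hw⟩ := exists_walk_of_move_avoiding hd (q.append (Walk.cons h r₁)) h' hxy'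
      (hyx' ▸ hxi ▸ hxy) (Ne.symm hback)
    exact ⟨w, by simp [hw]; omega⟩

end largestDisk

end hanoiGraph

/-- Any walk of minimal length (length equal to the graph distance) from the
perfect state `\overline{i}` to a vertex `v` of `H_n^k` moves the largest disk
(disk `n-1`) zero times if `v` lies in the substructure `[i]`, and exactly once
otherwise. -/
theorem hanoi_geodesic_moves_largest_disk_at_most_once (n k : ℕ) (hn : 1 ≤ n)
    (i : Fin k) (v : Fin n → Fin k)
    (p : (hanoiGraph n k).Walk (fun _ => i) v)
    (hp : p.length = (hanoiGraph n k).dist (fun _ => i) v) :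
    changeCount ⟨n - 1, by omega⟩ p = if v ⟨n - 1, by omega⟩ = i then 0 else 1 := by
  have hlargest : IsTop (⟨n - 1, by omega⟩ : Fin n) := fun e => Fin.le_def.2 (by simp; omega)
  exact hanoiGraph.changeCount_eq_ite_of_le_one _ p
    (hanoiGraph.changeCount_le_one_of_length_eq_dist hlargest p hp)
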